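/- In the Q-MAC setup, for any decoder with side information g : ((ZMod 2)²)ⁿ × C₂ → C₁, if ε = P[g(Y, X⁽²⁾) ≠ X⁽¹⁾], then (1 − ε) · log |C₁| ≤ n · (log 2 − H_P(Δ⁽¹⁾ | Δ⁽²⁾)) + log 2, where H_P(Δ⁽¹⁾ | Δ⁽²⁾) is the conditional Shannon entropy, under a single draw (Δ⁽¹⁾, Δ⁽²⁾) ∼ P, of the first coordinate given the second. (This is the finite-blocklength form of the necessary condition R₁ ≤ I[X₀⁽¹⁾; X₀⁽²⁾, Y₀].) -/

import Mathlib

/-!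
Meta-converse argument. Let `p` be the joint law of `(X⁽¹⁾, (Y, X⁽²⁾))` and `Q` the law of
`(Y, X⁽²⁾)` when `X⁽¹⁾` is replaced by a uniform word of `(ZMod 2)ⁿ`. Moving half of the mass
`Q b` onto the decoder's guess `g b` and spreading the rest uniformly over `C₁` gives a
subprobability `q` on `C₁ × observations`, and Gibbs' inequality `∑ p log (p / q) ≥ 0` becomes
`(1 - ε) log |C₁| ≤ D(p ‖ Unif(C₁) ⊗ Q) + log 2`. Since the noise is additive and i.i.d.,
`|C₁| p / Q` is a product over the `n` letters of `P δ / (P₂(δ₂) / 2)`, where `P₂` is the law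
of `Δ⁽²⁾`, so the divergence is `n (log 2 - H_P(Δ⁽¹⁾ | Δ⁽²⁾))`.
-/

open MeasureTheory

/-- Shannon entropy (in nats) of a random variable `X` taking values in a finite type,
`H[X] = ∑ s, (-P[X = s]) * log P[X = s]`. -/
noncomputable def entropy {Ω S : Type*} [MeasurableSpace Ω] [Fintype S]
    (μ : Measure Ω) (X : Ω → S) : ℝ :=
  ∑ s : S, Real.negMulLog (μ (X ⁻¹' {s})).toReal

/-- Conditional Shannon entropy (in nats), `H[X | Z] = H[(X, Z)] - H[Z]` (chain rule). -/
noncomputable def condEntropy {Ω S T : Type*} [MeasurableSpace Ω] [Fintype S] [Fintype T]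
    (μ : Measure Ω) (X : Ω → S) (Z : Ω → T) : ℝ :=
  entropy μ (fun ω => (X ω, Z ω)) - entropy μ Z

/-- Shannon entropy (in nats) of a probability distribution on a finite type. -/
noncomputable def distEntropy {S : Type*} [Fintype S] (P : PMF S) : ℝ :=
  ∑ s : S, Real.negMulLog (P s).toReal

/-- Conditional Shannon entropy (in nats), under a single draw `(Δ⁽¹⁾, Δ⁽²⁾) ∼ P`, of the
first coordinate given the second: `H_P(Δ⁽¹⁾ | Δ⁽²⁾) = H_P - H_P(Δ⁽²⁾)`. -/
noncomputable def distCondEntropyFst (P : PMF (ZMod 2 × ZMod 2)) : ℝ :=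
  distEntropy P - ∑ b : ZMod 2, Real.negMulLog (∑ a : ZMod 2, P (a, b)).toReal

open Finset Real

theorem sub_le_mul_log_div {p q : ℝ} (hp : 0 ≤ p) (hq : 0 ≤ q) (hpq : p ≠ 0 → q ≠ 0) :
    p - q ≤ p * log (p / q) := by
  rcases hp.eq_or_lt with rfl | hp
  · simpa using hq
  have hq : 0 < q := hq.lt_of_ne' (hpq hp.ne')
  have h := one_sub_inv_le_log_of_pos (div_pos hp hq)
  rw [inv_div] at h
  calc p - q = p * (1 - q / p) := by field_simp
    _ ≤ p * log (p / q) := mul_le_mul_of_nonneg_left h hp.le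

theorem sum_mul_log_div_nonneg {ι : Type*} [Fintype ι] {p q : ι → ℝ} (hp : ∀ i, 0 ≤ p i)
    (hq : ∀ i, 0 ≤ q i) (hpq : ∀ i, p i ≠ 0 → q i ≠ 0) (hsum : ∑ i, q i ≤ ∑ i, p i) :
    0 ≤ ∑ i, p i * log (p i / q i) :=
  calc 0 ≤ ∑ i, (p i - q i) := by rw [sum_sub_distrib]; linarith
    _ ≤ ∑ i, p i * log (p i / q i) :=
        sum_le_sum fun i _ => sub_le_mul_log_div (hp i) (hq i) (hpq i)

section Decoding

variable {α β : Type*} [Fintype α] [DecidableEq α] (g : β → α)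

/-- For a law `Q` of observations, `Q b * guessWeight g (a, b) / |α|` puts half of the mass `Q b`
on the decoder's guess `g b` and spreads the other half uniformly over `α`. -/
noncomputable def guessWeight (t : α × β) : ℝ :=
  (if g t.2 = t.1 then (Fintype.card α : ℝ) else 1) / 2

theorem guessWeight_pos [Nonempty α] (t : α × β) : 0 < guessWeight g t := by
  unfold guessWeight; split_ifs <;> positivity

theorem sum_guessWeight_le (b : β) : ∑ a, guessWeight g (a, b) ≤ Fintype.card α :=
  calc ∑ a, guessWeight g (a, b)
        ≤ ∑ a, (1 / 2 + if g b = a then (Fintype.card α : ℝ) / 2 else 0) :=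
        sum_le_sum fun a _ => by unfold guessWeight; split_ifs <;> simp
    _ = Fintype.card α := by simp [sum_add_distrib]; ring

theorem sum_mul_log_guessWeight [Fintype β] {p : α × β → ℝ} (hp1 : ∑ t, p t = 1) :
    ∑ t, p t * log (guessWeight g t)
      = (1 - ∑ t with g t.2 ≠ t.1, p t) * log (Fintype.card α) - log 2 := by
  have hlog : ∀ t, log (guessWeight g t)
      = (if g t.2 = t.1 then log (Fintype.card α) else 0) - log 2 := fun t => by
    have hM : (Fintype.card α : ℝ) ≠ 0 :=
      Nat.cast_ne_zero.2 (Fintype.card_pos_iff.2 ⟨t.1⟩).ne'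
    unfold guessWeight
    split_ifs
    · rw [log_div hM two_ne_zero]
    · rw [log_div one_ne_zero two_ne_zero, log_one]
  have hsucc : 1 - ∑ t with g t.2 ≠ t.1, p t = ∑ t with g t.2 = t.1, p t := by
    rw [← hp1, ← sum_filter_add_sum_filter_not univ (fun t => g t.2 = t.1)]
    ring
  simp only [hlog, hsucc, mul_sub, mul_ite, mul_zero, sum_sub_distrib, ← sum_mul, hp1, one_mul,
    sum_ite, sum_const_zero, add_zero]

theorem one_sub_error_mul_log_card_le [Fintype β] {p : α × β → ℝ} (hp : ∀ t, 0 ≤ p t)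
    (hp1 : ∑ t, p t = 1) {Q : β → ℝ} (hQ : ∀ b, 0 ≤ Q b) (hQ1 : ∑ b, Q b ≤ 1)
    (hpQ : ∀ t, p t ≠ 0 → Q t.2 ≠ 0) :
    (1 - ∑ t with g t.2 ≠ t.1, p t) * log (Fintype.card α)
      ≤ ∑ t, p t * log (Fintype.card α * p t / Q t.2) + log 2 := by
  set M : ℝ := (Fintype.card α : ℝ)
  have : Nonempty α := by
    obtain ⟨t, -⟩ : ∃ t, p t ≠ 0 := by
      by_contra! h
      simp [h] at hp1
    exact ⟨t.1⟩
  have hM : 0 < M := Nat.cast_pos.2 Fintype.card_pos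
  set q : α × β → ℝ := fun t => Q t.2 * guessWeight g t / M
  have hq : ∀ t, 0 ≤ q t := fun t => by have := hQ t.2; have := guessWeight_pos g t; positivity
  have hpq : ∀ t, p t ≠ 0 → q t ≠ 0 := fun t ht =>
    div_ne_zero (mul_ne_zero (hpQ t ht) (guessWeight_pos g t).ne') hM.ne'
  have hq_sum : ∑ t, q t ≤ ∑ t, p t := by
    rw [hp1, Fintype.sum_prod_type_right]
    calc ∑ b, ∑ a, q (a, b) = ∑ b, Q b / M * ∑ a, guessWeight g (a, b) :=
          sum_congr rfl fun b _ => by rw [mul_sum]; exact sum_congr rfl fun a _ => by ring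
      _ ≤ ∑ b, Q b / M * M :=
          sum_le_sum fun b _ => mul_le_mul_of_nonneg_left (sum_guessWeight_le g b)
            (div_nonneg (hQ b) hM.le)
      _ ≤ 1 := by simpa [hM.ne'] using hQ1
  have hsplit : ∀ t, p t * log (M * p t / Q t.2)
      = p t * log (p t / q t) + p t * log (guessWeight g t) := by
    intro t
    rcases eq_or_ne (p t) 0 with h | h
    · simp [h]
    have hQ0 := hpQ t h
    have hc0 := (guessWeight_pos g t).ne'
    have : M * p t / Q t.2 = p t / q t * guessWeight g t := by simp only [q]; field_simp
    rw [this, log_mul (div_ne_zero h (hpq t h)) hc0, mul_add]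
  rw [sum_congr rfl fun t _ => hsplit t, sum_add_distrib, sum_mul_log_guessWeight g hp1]
  linarith [sum_mul_log_div_nonneg hp hq hpq hq_sum]

end Decoding

section ProductWeights

variable {ι S : Type*} [Fintype ι] [DecidableEq ι] [Fintype S] {w : S → ℝ}

theorem sum_pi_prod_mul_apply (hw : ∑ s, w s = 1) (φ : S → ℝ) (i : ι) :
    ∑ d : ι → S, (∏ j, w (d j)) * φ (d i) = ∑ s, w s * φ s := by
  set F : ι → S → ℝ := Function.update (fun _ => w) i fun s => w s * φ s
  have hF : ∀ j ∈ ({i}ᶜ : Finset ι), F j = w := fun j hj =>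
    Function.update_of_ne (by simpa using hj) _ _
  have h : ∀ d : ι → S, (∏ j, w (d j)) * φ (d i) = ∏ j, F j (d j) := by
    intro d
    rw [Fintype.prod_eq_mul_prod_compl i, Fintype.prod_eq_mul_prod_compl i (fun j => F j (d j)),
      prod_congr rfl fun j hj => congrFun (hF j hj) (d j)]
    simp only [F, Function.update_self]
    ring
  simp_rw [h, ← Fintype.prod_sum, Fintype.prod_eq_mul_prod_compl i]
  rw [prod_eq_one fun j hj => by rw [hF j hj, hw]]
  simp [F]

theorem sum_pi_prod_mul_sum (hw : ∑ s, w s = 1) (φ : S → ℝ) :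
    ∑ d : ι → S, (∏ j, w (d j)) * ∑ i, φ (d i) = Fintype.card ι * ∑ s, w s * φ s := by
  calc ∑ d : ι → S, (∏ j, w (d j)) * ∑ i, φ (d i)
      = ∑ i, ∑ d : ι → S, (∏ j, w (d j)) * φ (d i) := by simp_rw [mul_sum]; exact sum_comm
    _ = Fintype.card ι * ∑ s, w s * φ s := by simp [sum_pi_prod_mul_apply hw]

theorem sum_pi_prod_mul_log_prod (hw : ∑ s, w s = 1) {f : S → ℝ} (hf : ∀ s, w s ≠ 0 → f s ≠ 0) :
    ∑ d : ι → S, (∏ j, w (d j)) * log (∏ j, f (d j))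
      = Fintype.card ι * ∑ s, w s * log (f s) := by
  rw [← sum_pi_prod_mul_sum hw]
  refine sum_congr rfl fun d _ => ?_
  rcases eq_or_ne (∏ j, w (d j)) 0 with h | h
  · simp [h]
  rw [log_prod fun j _ => hf _ (prod_ne_zero_iff.1 h j (mem_univ j))]

end ProductWeights

theorem PMF.sum_toReal {S : Type*} [Fintype S] (P : PMF S) : ∑ s, (P s).toReal = 1 := by
  rw [← ENNReal.toReal_sum fun s _ => P.apply_ne_top s, ← tsum_fintype (L := .unconditional _),
    P.tsum_coe, ENNReal.toReal_one]

section QMAC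

variable {n : ℕ} (P : PMF (ZMod 2 × ZMod 2))

/-- Law of `(U + Δ⁽¹⁾, Δ⁽²⁾)` for a uniform bit `U` independent of `(Δ⁽¹⁾, Δ⁽²⁾) ∼ P`. -/
noncomputable def uniformFstLaw (s : ZMod 2 × ZMod 2) : ℝ :=
  (∑ a, (P (a, s.2)).toReal) / 2

theorem uniformFstLaw_nonneg (s : ZMod 2 × ZMod 2) : 0 ≤ uniformFstLaw P s := by
  unfold uniformFstLaw; positivity

theorem sum_uniformFstLaw : ∑ s, uniformFstLaw P s = 1 := by
  simp only [uniformFstLaw, Fintype.sum_prod_type, sum_const, card_univ, ZMod.card, nsmul_eq_mul]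
  rw [← sum_div, sum_comm, ← Fintype.sum_prod_type', P.sum_toReal]
  norm_num

theorem uniformFstLaw_ne_zero {s : ZMod 2 × ZMod 2} (hs : (P s).toReal ≠ 0) :
    uniformFstLaw P s ≠ 0 := by
  refine div_ne_zero (ne_of_gt ?_) two_ne_zero
  exact lt_of_lt_of_le (lt_of_le_of_ne ENNReal.toReal_nonneg hs.symm)
    (single_le_sum (f := fun a => (P (a, s.2)).toReal) (fun _ _ => ENNReal.toReal_nonneg)
      (mem_univ s.1))

theorem log_two_sub_distCondEntropyFst :
    log 2 - distCondEntropyFst P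
      = ∑ s, (P s).toReal * log ((P s).toReal / uniformFstLaw P s) := by
  set m : ZMod 2 → ℝ := fun b => ∑ a, (P (a, b)).toReal
  have hterm : ∀ s, (P s).toReal * log ((P s).toReal / uniformFstLaw P s)
      = (P s).toReal * log 2 - negMulLog (P s).toReal - (P s).toReal * log (m s.2) := by
    intro s
    rcases eq_or_ne (P s).toReal 0 with h | h
    · simp [h]
    have hu := uniformFstLaw_ne_zero P h
    have hm : m s.2 ≠ 0 := by simpa [uniformFstLaw] using hu
    rw [log_div h hu, uniformFstLaw, log_div hm two_ne_zero, negMulLog]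
    ring
  have hsnd : ∑ s : ZMod 2 × ZMod 2, (P s).toReal * log (m s.2) = -∑ b, negMulLog (m b) := by
    simp only [Fintype.sum_prod_type_right, ← sum_mul, negMulLog, neg_mul, sum_neg_distrib,
      neg_neg, m]
  simp only [hterm, sum_sub_distrib, ← sum_mul, P.sum_toReal, hsnd, distCondEntropyFst,
    distEntropy, ENNReal.toReal_sum fun a _ => P.apply_ne_top (a, _), m]
  ring

variable (C₂ : Submodule (ZMod 2) (Fin n → ZMod 2))

/-- Law of `(Y, X⁽²⁾)` when `X⁽¹⁾` is replaced by a uniform word of `(ZMod 2)ⁿ`. -/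
noncomputable def auxOutputLaw (b : (Fin n → ZMod 2 × ZMod 2) × C₂) : ℝ :=
  (Nat.card C₂ : ℝ)⁻¹ * ∏ i, uniformFstLaw P (b.1 i - (0, (b.2 : Fin n → ZMod 2) i))

theorem auxOutputLaw_nonneg (b : (Fin n → ZMod 2 × ZMod 2) × C₂) : 0 ≤ auxOutputLaw P C₂ b :=
  mul_nonneg (by positivity) (prod_nonneg fun i _ => uniformFstLaw_nonneg P _)

theorem auxOutputLaw_eq (x₁ : Fin n → ZMod 2) (y : Fin n → ZMod 2 × ZMod 2) (c₂ : C₂) :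
    auxOutputLaw P C₂ (y, c₂)
      = (Nat.card C₂ : ℝ)⁻¹ *
        ∏ i, uniformFstLaw P ((y - Function.prod x₁ (c₂ : Fin n → ZMod 2)) i) := by
  simp [auxOutputLaw, uniformFstLaw]

theorem sum_auxOutputLaw [Fintype C₂] : ∑ b, auxOutputLaw P C₂ b = 1 := by
  have hblock (x : Fin n → ZMod 2 × ZMod 2) :
      ∑ y : Fin n → ZMod 2 × ZMod 2, ∏ i, uniformFstLaw P ((y - x) i) = 1 :=
    calc ∑ y : Fin n → ZMod 2 × ZMod 2, ∏ i, uniformFstLaw P ((y - x) i)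
        = ∑ d : Fin n → ZMod 2 × ZMod 2, ∏ i, uniformFstLaw P (d i) :=
          Fintype.sum_equiv (Equiv.subRight x) _ _ fun _ => rfl
      _ = 1 := by simp [← Fintype.prod_sum, sum_uniformFstLaw]
  simp only [Fintype.sum_prod_type_right, auxOutputLaw_eq P C₂ 0, ← mul_sum, hblock]
  simp [← Nat.card_eq_fintype_card]

theorem auxOutputLaw_ne_zero {x₁ : Fin n → ZMod 2} {y : Fin n → ZMod 2 × ZMod 2} {c₂ : C₂}
    (h : ∏ i, (P ((y - Function.prod x₁ (c₂ : Fin n → ZMod 2)) i)).toReal ≠ 0) :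
    auxOutputLaw P C₂ (y, c₂) ≠ 0 := by
  rw [auxOutputLaw_eq P C₂ x₁]
  exact mul_ne_zero (inv_ne_zero (Nat.cast_ne_zero.2 Nat.card_pos.ne'))
    (prod_ne_zero_iff.2 fun i _ => uniformFstLaw_ne_zero P (prod_ne_zero_iff.1 h i (mem_univ i)))

theorem sum_mul_log_div_auxOutputLaw {C₁ : Submodule (ZMod 2) (Fin n → ZMod 2)} [Fintype C₁]
    [Fintype C₂] {p : C₁ × (Fin n → ZMod 2 × ZMod 2) × C₂ → ℝ}
    (hp : ∀ c₁ y c₂, p (c₁, y, c₂) = (Nat.card C₁ * Nat.card C₂ : ℝ)⁻¹ *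
      ∏ i, (P ((y - Function.prod (c₁ : Fin n → ZMod 2) (c₂ : Fin n → ZMod 2)) i)).toReal) :
    ∑ t, p t * log (Nat.card C₁ * p t / auxOutputLaw P C₂ t.2)
      = n * (log 2 - distCondEntropyFst P) := by
  set M : ℝ := (Nat.card C₁ : ℝ)
  set N : ℝ := (Nat.card C₂ : ℝ)
  have hM : M ≠ 0 := Nat.cast_ne_zero.2 Nat.card_pos.ne'
  have hN : N ≠ 0 := Nat.cast_ne_zero.2 Nat.card_pos.ne'
  set G : (Fin n → ZMod 2 × ZMod 2) → ℝ := fun d =>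
    (∏ i, (P (d i)).toReal) * log ((∏ i, (P (d i)).toReal) / ∏ i, uniformFstLaw P (d i))
  have hscale (r u : ℝ) : (M * N)⁻¹ * r * log (M * ((M * N)⁻¹ * r) / (N⁻¹ * u))
      = (M * N)⁻¹ * (r * log (r / u)) := by
    have : M * ((M * N)⁻¹ * r) / (N⁻¹ * u) = r / u := by
      simp only [div_eq_mul_inv, mul_inv, inv_inv]
      field_simp
    rw [mul_assoc, this]
  have hterm : ∀ c₁ y c₂, p (c₁, y, c₂) * log (M * p (c₁, y, c₂) / auxOutputLaw P C₂ (y, c₂))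
      = (M * N)⁻¹ * G (y - Function.prod (c₁ : Fin n → ZMod 2) (c₂ : Fin n → ZMod 2)) := by
    intro c₁ y c₂
    rw [hp, auxOutputLaw_eq P C₂ c₁]
    exact hscale _ _
  calc ∑ t, p t * log (M * p t / auxOutputLaw P C₂ t.2)
      = ∑ _c₁ : C₁, ∑ _c₂ : C₂, (M * N)⁻¹ * ∑ d, G d := by
        rw [Fintype.sum_prod_type]
        refine sum_congr rfl fun c₁ _ => ?_
        rw [Fintype.sum_prod_type_right]
        refine sum_congr rfl fun c₂ _ => ?_
        rw [mul_sum]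
        exact Fintype.sum_equiv (Equiv.subRight _) _ _ fun y => hterm c₁ y c₂
    _ = ∑ d, G d := by
        simp only [sum_const, card_univ, Fintype.card_eq_nat_card, nsmul_eq_mul, ← mul_assoc]
        change M * N * (M * N)⁻¹ * _ = _
        rw [mul_inv_cancel₀ (mul_ne_zero hM hN), one_mul]
    _ = n * ∑ s, (P s).toReal * log ((P s).toReal / uniformFstLaw P s) := by
        simp only [G, ← prod_div_distrib]
        simpa using sum_pi_prod_mul_log_prod (ι := Fin n) P.sum_toReal
          fun s hs => div_ne_zero hs (uniformFstLaw_ne_zero P hs)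
    _ = n * (log 2 - distCondEntropyFst P) := by rw [log_two_sub_distCondEntropyFst]

end QMAC

section Channel

variable {Ω : Type*} {n : ℕ} {X1 X2 : Ω → Fin n → ZMod 2} {Δ Y : Ω → Fin n → ZMod 2 × ZMod 2}

theorem setOf_output_eq (hY : ∀ ω i, Y ω i = (X1 ω i, X2 ω i) + Δ ω i)
    (x₁ x₂ : Fin n → ZMod 2) (y : Fin n → ZMod 2 × ZMod 2) :
    {ω | X1 ω = x₁ ∧ Y ω = y ∧ X2 ω = x₂}
      = {ω | X1 ω = x₁ ∧ X2 ω = x₂ ∧ Δ ω = y - Function.prod x₁ x₂} := by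
  ext ω
  have hYω : Y ω = Function.prod (X1 ω) (X2 ω) + Δ ω := funext (hY ω)
  simp only [Set.mem_ofPred_eq, hYω, eq_sub_iff_add_eq']
  constructor
  · rintro ⟨rfl, h, rfl⟩
    exact ⟨rfl, rfl, h⟩
  · rintro ⟨rfl, rfl, h⟩
    exact ⟨rfl, h, rfl⟩

variable [MeasurableSpace Ω] {μ : Measure Ω}

theorem measurableSet_output (hX1m : ∀ c, MeasurableSet (X1 ⁻¹' {c}))
    (hX2m : ∀ c, MeasurableSet (X2 ⁻¹' {c})) (hΔm : ∀ d, MeasurableSet (Δ ⁻¹' {d}))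
    (hY : ∀ ω i, Y ω i = (X1 ω i, X2 ω i) + Δ ω i) (x₁ x₂ : Fin n → ZMod 2)
    (y : Fin n → ZMod 2 × ZMod 2) : MeasurableSet {ω | X1 ω = x₁ ∧ Y ω = y ∧ X2 ω = x₂} := by
  rw [setOf_output_eq hY]
  exact (hX1m _).inter ((hX2m _).inter (hΔm _))

theorem measureReal_output {P : PMF (ZMod 2 × ZMod 2)} {C₁ C₂ : Submodule (ZMod 2) (Fin n → ZMod 2)}
    (hX1 : ∀ c ∈ C₁, μ (X1 ⁻¹' {c}) = (Nat.card C₁ : ENNReal)⁻¹)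
    (hX2 : ∀ c ∈ C₂, μ (X2 ⁻¹' {c}) = (Nat.card C₂ : ENNReal)⁻¹)
    (hΔ : ∀ d, μ (Δ ⁻¹' {d}) = ∏ i, P (d i))
    (hindep : ∀ c₁ c₂ d, μ {ω | X1 ω = c₁ ∧ X2 ω = c₂ ∧ Δ ω = d}
      = μ (X1 ⁻¹' {c₁}) * μ (X2 ⁻¹' {c₂}) * μ (Δ ⁻¹' {d}))
    (hY : ∀ ω i, Y ω i = (X1 ω i, X2 ω i) + Δ ω i) {x₁ x₂ : Fin n → ZMod 2} (hx₁ : x₁ ∈ C₁)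
    (hx₂ : x₂ ∈ C₂) (y : Fin n → ZMod 2 × ZMod 2) :
    μ.real {ω | X1 ω = x₁ ∧ Y ω = y ∧ X2 ω = x₂}
      = (Nat.card C₁ * Nat.card C₂ : ℝ)⁻¹ * ∏ i, (P ((y - Function.prod x₁ x₂) i)).toReal := by
  simp only [measureReal_def, setOf_output_eq hY, hindep, hX1 _ hx₁, hX2 _ hx₂, hΔ,
    ENNReal.toReal_mul, ENNReal.toReal_inv, ENNReal.toReal_prod, ENNReal.toReal_natCast, mul_inv]

end Channel

/-- Q-MAC setup with any side-information decoder
`g : ((ZMod 2)²)ⁿ × C₂ → C₁`: if `ε = P[g(Y, X⁽²⁾) ≠ X⁽¹⁾]`, then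
`(1 - ε) · log |C₁| ≤ n · (log 2 - H_P(Δ⁽¹⁾ | Δ⁽²⁾)) + log 2`, the finite-blocklength form of
the condition `R₁ ≤ I[X₀⁽¹⁾; X₀⁽²⁾, Y₀]`. -/
theorem stmt_13 {Ω : Type*} [MeasurableSpace Ω] (μ : Measure Ω) [IsProbabilityMeasure μ]
    (n : ℕ) (P : PMF (ZMod 2 × ZMod 2))
    (C₁ C₂ : Submodule (ZMod 2) (Fin n → ZMod 2))
    (X1 X2 : Ω → Fin n → ZMod 2) (Δ : Ω → Fin n → ZMod 2 × ZMod 2)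
    (Y : Ω → Fin n → ZMod 2 × ZMod 2)
    (hX1m : ∀ c, MeasurableSet (X1 ⁻¹' {c}))
    (hX2m : ∀ c, MeasurableSet (X2 ⁻¹' {c}))
    (hΔm : ∀ d, MeasurableSet (Δ ⁻¹' {d}))
    (hX1mem : ∀ ω, X1 ω ∈ C₁) (hX2mem : ∀ ω, X2 ω ∈ C₂)
    (hX1 : ∀ c ∈ C₁, μ (X1 ⁻¹' {c}) = (Nat.card C₁ : ENNReal)⁻¹)
    (hX2 : ∀ c ∈ C₂, μ (X2 ⁻¹' {c}) = (Nat.card C₂ : ENNReal)⁻¹)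
    (hΔ : ∀ d, μ (Δ ⁻¹' {d}) = ∏ i, P (d i))
    (hindep : ∀ c₁ c₂ d, μ {ω | X1 ω = c₁ ∧ X2 ω = c₂ ∧ Δ ω = d}
      = μ (X1 ⁻¹' {c₁}) * μ (X2 ⁻¹' {c₂}) * μ (Δ ⁻¹' {d}))
    (hY : ∀ ω i, Y ω i = (X1 ω i, X2 ω i) + Δ ω i)
    (g : (Fin n → ZMod 2 × ZMod 2) × C₂ → C₁) (ε : ℝ)
    (hε : ε = (μ {ω | (g (Y ω, ⟨X2 ω, hX2mem ω⟩) : Fin n → ZMod 2) ≠ X1 ω}).toReal) :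
    (1 - ε) * Real.log (Nat.card C₁)
      ≤ n * (Real.log 2 - distCondEntropyFst P) + Real.log 2 := by
  classical
  let Z : Ω → C₁ × (Fin n → ZMod 2 × ZMod 2) × C₂ :=
    fun ω => (⟨X1 ω, hX1mem ω⟩, Y ω, ⟨X2 ω, hX2mem ω⟩)
  have hZ (c₁ : C₁) (y : Fin n → ZMod 2 × ZMod 2) (c₂ : C₂) :
      Z ⁻¹' {(c₁, y, c₂)} = {ω | X1 ω = c₁ ∧ Y ω = y ∧ X2 ω = c₂} := by
    ext ω
    simp [Z, Subtype.ext_iff]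
  have hZm : ∀ t, MeasurableSet (Z ⁻¹' {t}) := fun ⟨c₁, y, c₂⟩ =>
    hZ c₁ y c₂ ▸ measurableSet_output hX1m hX2m hΔm hY _ _ y
  let p t := μ.real (Z ⁻¹' {t})
  have hp (c₁ : C₁) (y : Fin n → ZMod 2 × ZMod 2) (c₂ : C₂) :
      p (c₁, y, c₂) = (Nat.card C₁ * Nat.card C₂ : ℝ)⁻¹ *
        ∏ i, (P ((y - Function.prod (c₁ : Fin n → ZMod 2) (c₂ : Fin n → ZMod 2)) i)).toReal := by
    simp only [p, hZ]
    exact measureReal_output hX1 hX2 hΔ hindep hY c₁.2 c₂.2 y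
  have hsum (s : Finset _) : ∑ t ∈ s, p t = μ.real (Z ⁻¹' s) :=
    sum_measureReal_preimage_singleton s (fun t _ => hZm t) fun _ _ => measure_ne_top μ _
  have hp1 : ∑ t, p t = 1 := by simp [hsum]
  have herr : ε = ∑ t with g t.2 ≠ t.1, p t := by
    rw [hsum, hε, measureReal_def, coe_filter_univ]
    congr 2
    ext ω
    exact Subtype.coe_ne_coe (b := (⟨X1 ω, hX1mem ω⟩ : C₁))
  have hpQ : ∀ t, p t ≠ 0 → auxOutputLaw P C₂ t.2 ≠ 0 := fun ⟨c₁, y, c₂⟩ h =>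
    auxOutputLaw_ne_zero P C₂ (x₁ := c₁) (right_ne_zero_of_mul (hp c₁ y c₂ ▸ h))
  have key := one_sub_error_mul_log_card_le g (fun _ => measureReal_nonneg) hp1
    (auxOutputLaw_nonneg P C₂) (sum_auxOutputLaw P C₂).le hpQ
  rwa [← herr, Fintype.card_eq_nat_card, sum_mul_log_div_auxOutputLaw P C₂ hp] at key
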